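/- Let A, B ∈ M_n(ℂ), set S(t) := exp(itA/2) · exp(itB) · exp(itA/2) and F(t) := exp(−itA/2) · exp(−itB) · exp(−itA/2) · exp(it(A+B)) (so that exp(it(A+B)) = S(t) F(t)). Define A₂(t) := exp(−itA/2) · ( (1/2)(exp(−itB) A exp(itB) − A) + exp(−itB)(exp(−itA/2) B exp(itA/2) − B) exp(itB) ) · exp(itA/2). Then F is differentiable with F(0) = 1 and F′(t) = i A₂(t) F(t) for every t ∈ ℝ. -/

import Mathlib

/-!
Write `F = a b a e` with `a = exp(tα)`, `b = exp(tβ)`, `e = exp(-t(2α + β))`, where `α = -iA/2`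
and `β = -iB`. By the product rule `F' F⁻¹ = α + aβa⁻¹ + abαb⁻¹a⁻¹ - aba(2α + β)a⁻¹b⁻¹a⁻¹`.
Since `a` commutes with `α` and `b` with `β`, this collapses to
`a((α - bαb⁻¹) + b(β - aβa⁻¹)b⁻¹)a⁻¹`, which is `i A₂(t)`.
-/

open scoped Matrix.Norms.L2Operator
open Matrix

/-- The exact error Hamiltonian of the second-order (Strang) splitting. -/
noncomputable def A2 {n : ℕ} (A B : Matrix (Fin n) (Fin n) ℂ) (t : ℝ) :
    Matrix (Fin n) (Fin n) ℂ :=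
  NormedSpace.exp ((-(Complex.I * (t : ℂ) / 2)) • A) *
    ((1 / 2 : ℂ) •
        (NormedSpace.exp ((-(Complex.I * (t : ℂ))) • B) * A *
            NormedSpace.exp ((Complex.I * (t : ℂ)) • B) - A) +
      NormedSpace.exp ((-(Complex.I * (t : ℂ))) • B) *
        (NormedSpace.exp ((-(Complex.I * (t : ℂ) / 2)) • A) * B *
            NormedSpace.exp ((Complex.I * (t : ℂ) / 2) • A) - B) *
        NormedSpace.exp ((Complex.I * (t : ℂ)) • B)) *
    NormedSpace.exp ((Complex.I * (t : ℂ) / 2) • A)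

open NormedSpace Complex

theorem HasDerivAt.exp_smul_const {𝔸 : Type*} [NormedRing 𝔸] [NormedAlgebra ℂ 𝔸]
    [CompleteSpace 𝔸] {f : ℝ → ℂ} {c : ℂ} {t : ℝ} (hf : HasDerivAt f c t) (x : 𝔸) :
    HasDerivAt (fun s => NormedSpace.exp (f s • x)) ((c • x) * NormedSpace.exp (f t • x)) t := by
  rw [smul_mul_assoc]
  exact (hasDerivAt_exp_smul_const' x (f t)).scomp t hf

theorem Matrix.exp_mul_exp_neg {m 𝔸 : Type*} [Fintype m] [DecidableEq m] [NormedRing 𝔸]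
    [NormedAlgebra ℚ 𝔸] [CompleteSpace 𝔸] (x : Matrix m m 𝔸) : exp x * exp (-x) = 1 := by
  rw [← exp_add_of_commute _ _ (Commute.refl x).neg_right, add_neg_cancel, NormedSpace.exp_zero]

-- The right side is the product-rule derivative of `a * b * a * e` when `a`, `b`, `e` have
-- derivatives `p * a`, `q * b`, `-(2p + q) * e`.
theorem strang_error_deriv_eq {R : Type*} [Ring R] {a a' b b' p q : R} (e : R)
    (ha : a' * a = 1) (hb : b' * b = 1) (hap : Commute a p) (hbq : Commute b q) :
    a * ((p - b * p * b') + b * (q - a * q * a') * b') * a' * (a * b * a * e)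
      = ((p * a * b + a * (q * b)) * a + a * b * (p * a)) * e
        + a * b * a * ((-(p + p) - q) * e) := by
  have ha' : ∀ x, a' * (a * x) = x := fun x => by rw [← mul_assoc, ha, one_mul]
  have hb' : ∀ x, b' * (b * x) = x := fun x => by rw [← mul_assoc, hb, one_mul]
  have hap' : ∀ x, a * (p * x) = p * (a * x) := fun x => by rw [← mul_assoc, hap.eq, mul_assoc]
  have hbq' : ∀ x, b * (q * x) = q * (b * x) := fun x => by rw [← mul_assoc, hbq.eq, mul_assoc]
  simp only [mul_add, add_mul, mul_sub, sub_mul, mul_neg, neg_mul, neg_add, mul_assoc,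
    ha', hb', hap', hbq']
  abel

theorem I_smul_A2 {n : ℕ} (A B : Matrix (Fin n) (Fin n) ℂ) (t : ℝ) :
    I • A2 A B t =
      exp ((-(I * t / 2)) • A) *
        ((-(I / 2) • A - exp ((-(I * t)) • B) * (-(I / 2) • A) * exp ((I * t) • B)) +
          exp ((-(I * t)) • B) *
            (-I • B - exp ((-(I * t / 2)) • A) * (-I • B) * exp ((I * t / 2) • A)) *
            exp ((I * t) • B)) *
        exp ((I * t / 2) • A) := by
  simp only [A2, smul_add, smul_sub, smul_smul, mul_smul_comm, smul_mul_assoc,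
    sub_mul, add_mul, mul_sub, mul_add, mul_assoc, neg_smul, neg_mul, mul_neg]
  module

/-- the error unitary of the Strang splitting satisfies `F(0) = 1` and
`F'(t) = i A₂(t) F(t)`. -/
theorem stmt19 {n : ℕ} (A B : Matrix (Fin n) (Fin n) ℂ)
    (F : ℝ → Matrix (Fin n) (Fin n) ℂ)
    (hF : F = fun t : ℝ =>
      NormedSpace.exp ((-(Complex.I * (t : ℂ) / 2)) • A) *
      NormedSpace.exp ((-(Complex.I * (t : ℂ))) • B) *
      NormedSpace.exp ((-(Complex.I * (t : ℂ) / 2)) • A) *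
      NormedSpace.exp ((Complex.I * (t : ℂ)) • (A + B))) :
    F 0 = 1 ∧ ∀ t : ℝ, HasDerivAt F (Complex.I • (A2 A B t * F t)) t := by
  subst hF
  refine ⟨by simp, fun t => ?_⟩
  have hα : HasDerivAt (fun s : ℝ => -(I * s / 2)) (-(I / 2)) t := by
    simpa using (((hasDerivAt_id (t : ℂ)).const_mul I).div_const 2).neg.comp_ofReal
  have hβ : HasDerivAt (fun s : ℝ => -(I * s)) (-I) t := by
    simpa using ((hasDerivAt_id (t : ℂ)).const_mul I).neg.comp_ofReal
  have hγ : HasDerivAt (fun s : ℝ => I * s) I t := by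
    simpa using ((hasDerivAt_id (t : ℂ)).const_mul I).comp_ofReal
  have hprod := ((hα.exp_smul_const A).mul (hβ.exp_smul_const B)).mul
    (hα.exp_smul_const A) |>.mul (hγ.exp_smul_const (A + B))
  rw [show I • (A + B) = -(-(I / 2) • A + -(I / 2) • A) - -I • B by module] at hprod
  refine hprod.congr_deriv ?_
  rw [← smul_mul_assoc, I_smul_A2]
  refine (strang_error_deriv_eq _ ?_ ?_ ?_ ?_).symm
  · simpa [neg_div] using exp_mul_exp_neg ((I * t / 2) • A)
  · simpa using exp_mul_exp_neg ((I * t) • B)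
  · exact (((Commute.refl A).smul_left _).smul_right _).exp_left
  · exact (((Commute.refl B).smul_left _).smul_right _).exp_left
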